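/- Let ℋ be a Hilbert space, H₀ a bounded self-adjoint operator, and t ↦ V(t) a strongly continuous family of bounded operators with ‖V(t)‖ ≤ C⟨t⟩^{-δ} for some δ > 1 and C ≥ 0. Let u : ℝ → ℋ be continuously differentiable with u'(t) = i(H₀ + V(t))u(t) and sup_t ‖u(t)‖ < ∞. Then the limits lim_{t→+∞} e^{-itH₀}u(t) and lim_{t→−∞} e^{-itH₀}u(t) exist in ℋ. -/

import Mathlib

open Filter Topology MeasureTheory NormedSpace Complex

/-!
In the interaction picture `w t = e^{-itH₀} u t` the free evolution cancels, leaving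
`w' t = e^{-itH₀} (i V t (u t))`. As `e^{-itH₀}` is unitary, `‖w' t‖ ≤ C M ⟨t⟩^{-δ}` with
`M = sup ‖u‖`, which is integrable for `δ > 1`; a function with integrable derivative converges
at `±∞` (Cook's argument).
-/

theorem exists_tendsto_atTop_and_atBot_of_hasDerivAt_of_integrable_bound
    {F : Type*} [NormedAddCommGroup F] [NormedSpace ℝ F] [CompleteSpace F]
    {w w' : ℝ → F} {g : ℝ → ℝ} (hw : ∀ t, HasDerivAt w (w' t) t)
    (hg : Integrable g) (hw'g : ∀ t, ‖w' t‖ ≤ g t) :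
    (∃ l, Tendsto w atTop (𝓝 l)) ∧ ∃ l, Tendsto w atBot (𝓝 l) := by
  have hw' : deriv w = w' := funext fun t => (hw t).deriv
  have hint : Integrable w' :=
    hg.mono' (hw' ▸ aestronglyMeasurable_deriv w volume) (Eventually.of_forall hw'g)
  exact ⟨⟨_, tendsto_limUnder_of_hasDerivAt_of_integrableOn_Ioi (a := 0) (fun t _ => hw t)
      hint.integrableOn⟩,
    ⟨_, tendsto_limUnder_of_hasDerivAt_of_integrableOn_Iic (a := 0) (fun t _ => hw t)
      hint.integrableOn⟩⟩

theorem integrable_one_add_sq_rpow_neg_half {δ : ℝ} (hδ : 1 < δ) :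
    Integrable fun t : ℝ => (1 + t ^ 2) ^ (-δ / 2) := by
  simpa [Real.norm_eq_abs, sq_abs] using
    integrable_rpow_neg_one_add_norm_sq (E := ℝ) (μ := volume) (r := δ) (by simpa using hδ)

theorem IsSelfAdjoint.exp_neg_I_mul_smul_mem_unitary {A : Type*} [NormedRing A]
    [NormedAlgebra ℂ A] [StarRing A] [ContinuousStar A] [CompleteSpace A] [StarModule ℂ A]
    {a : A} (ha : IsSelfAdjoint a) (t : ℝ) :
    NormedSpace.exp ((-(I * t)) • a) ∈ unitary A := by
  have hta : IsSelfAdjoint (((-t : ℝ) : ℂ) • a) :=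
    ((im_eq_zero_iff_isSelfAdjoint _).mp (ofReal_im _)).smul ha
  have h : (-(I * t)) • a = I • (((-t : ℝ) : ℂ) • a) := by
    rw [smul_smul]; push_cast; ring_nf
  simpa [h] using (selfAdjoint.expUnitary ⟨_, hta⟩).prop

section Propagator

variable {E : Type*} [NormedAddCommGroup E] [NormedSpace ℂ E] [CompleteSpace E]

theorem hasDerivAt_exp_neg_I_mul_smul (H₀ : E →L[ℂ] E) (t : ℝ) :
    HasDerivAt (fun s : ℝ => exp ((-(I * s)) • H₀))
      (exp ((-(I * t)) • H₀) * (-I) • H₀) t := by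
  have h := hasDerivAt_exp_smul_const ((-I) • H₀) t
  have hsmul : ∀ s : ℝ, s • (-I) • H₀ = (-(I * s)) • H₀ := fun s => by
    rw [← coe_smul, smul_smul]; ring_nf
  simpa only [hsmul] using h

theorem hasDerivAt_exp_neg_I_mul_smul_apply (H₀ : E →L[ℂ] E) {u : ℝ → E} {u' : E} {t : ℝ}
    (hu : HasDerivAt u u' t) :
    HasDerivAt (fun s : ℝ => exp ((-(I * s)) • H₀) (u s))
      (exp ((-(I * t)) • H₀) (u' - I • H₀ (u t))) t := by
  -- `clm_apply` differentiates over the scalar field of the operators, here `ℝ`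
  let R := ContinuousLinearMap.restrictScalarsIsometry ℂ E E ℝ ℝ
  have h := (R.toContinuousLinearMap.hasFDerivAt.comp_hasDerivAt t
    (hasDerivAt_exp_neg_I_mul_smul H₀ t)).clm_apply hu
  refine h.congr_deriv ?_
  change (exp ((-(I * t)) • H₀) * (-I) • H₀) (u t) + exp ((-(I * t)) • H₀) u' = _
  simp [sub_eq_add_neg, add_comm]

end Propagator

theorem cook_method_asymptotic_data_general
    {E : Type*} [NormedAddCommGroup E] [InnerProductSpace ℂ E] [CompleteSpace E]
    (H₀ : E →L[ℂ] E) (hH₀ : IsSelfAdjoint H₀)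
    (V : ℝ → (E →L[ℂ] E))
    (δ C : ℝ) (hδ : 1 < δ)
    (hV : ∀ t : ℝ, ‖V t‖ ≤ C * (1 + t^2) ^ (-δ/2))
    (u : ℝ → E) (hu : ∀ t, HasDerivAt u (Complex.I • (H₀ + V t) (u t)) t)
    (hbound : ∃ M : ℝ, ∀ t, ‖u t‖ ≤ M) :
    (∃ wp : E, Tendsto
      (fun t : ℝ => NormedSpace.exp ((-(Complex.I * t)) • H₀) (u t)) atTop (nhds wp)) ∧
    (∃ wm : E, Tendsto
      (fun t : ℝ => NormedSpace.exp ((-(Complex.I * t)) • H₀) (u t)) atBot (nhds wm)) := by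
  obtain ⟨M, hM⟩ := hbound
  have hderiv : ∀ t : ℝ, HasDerivAt (fun s : ℝ => exp ((-(I * s)) • H₀) (u s))
      (exp ((-(I * t)) • H₀) (I • V t (u t))) t := fun t => by
    simpa [smul_add] using hasDerivAt_exp_neg_I_mul_smul_apply H₀ (hu t)
  refine exists_tendsto_atTop_and_atBot_of_hasDerivAt_of_integrable_bound hderiv
    ((integrable_one_add_sq_rpow_neg_half hδ).const_mul (C * M)) fun t => ?_
  have hVt : 0 ≤ C * (1 + t ^ 2) ^ (-δ / 2) := (norm_nonneg _).trans (hV t)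
  calc ‖exp ((-(I * t)) • H₀) (I • V t (u t))‖ = ‖V t (u t)‖ := by
        rw [ContinuousLinearMap.norm_map_of_mem_unitary (hH₀.exp_neg_I_mul_smul_mem_unitary t),
          norm_smul, norm_I, one_mul]
    _ ≤ ‖V t‖ * ‖u t‖ := (V t).le_opNorm _
    _ ≤ C * (1 + t ^ 2) ^ (-δ / 2) * M := mul_le_mul (hV t) (hM t) (norm_nonneg _) hVt
    _ = C * M * (1 + t ^ 2) ^ (-δ / 2) := by ring

/-- Cook's method / existence of wave data: if `u' = i(H₀ + V(t))u` with `H₀` bounded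
self-adjoint, `V` strongly continuous with short-range decay `‖V(t)‖ ≤ C⟨t⟩^{-δ}`, `δ > 1`,
and `u` bounded, then `e^{-itH₀}u(t)` converges as `t → ±∞`. -/
theorem cook_method_asymptotic_data
    {E : Type*} [NormedAddCommGroup E] [InnerProductSpace ℂ E] [CompleteSpace E]
    (H₀ : E →L[ℂ] E) (hH₀ : IsSelfAdjoint H₀)
    (V : ℝ → (E →L[ℂ] E)) (hVcont : ∀ x : E, Continuous fun t => V t x)
    (δ C : ℝ) (hδ : 1 < δ) (hC : 0 ≤ C)
    (hV : ∀ t : ℝ, ‖V t‖ ≤ C * (1 + t^2) ^ (-δ/2))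
    (u : ℝ → E) (hu : ∀ t, HasDerivAt u (Complex.I • (H₀ + V t) (u t)) t)
    (hbound : ∃ M : ℝ, ∀ t, ‖u t‖ ≤ M) :
    (∃ wp : E, Tendsto
      (fun t : ℝ => NormedSpace.exp ((-(Complex.I * t)) • H₀) (u t)) atTop (nhds wp)) ∧
    (∃ wm : E, Tendsto
      (fun t : ℝ => NormedSpace.exp ((-(Complex.I * t)) • H₀) (u t)) atBot (nhds wm)) :=
  cook_method_asymptotic_data_general H₀ hH₀ V δ C hδ hV u hu hbound
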